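/- arXiv:2404.07885 — 5 statements merged into one kernel-verified Lean document; each statement's English description precedes it below -/
import Mathlib

section
/- If N is a quotient of a matroid M on the same ground set E, then every handle of N is a handle of M. -/
open Classical

/-- A matroid on a finite ground set `E`, presented by its nonempty collection of bases,
which satisfies the basis exchange axiom. -/
structure FinMatroid (α : Type*) [DecidableEq α] where
  E : Finset α
  bases : Finset (Finset α)
  bases_nonempty : bases.Nonempty
  subset_ground : ∀ B ∈ bases, B ⊆ E
  exchange : ∀ B ∈ bases, ∀ B' ∈ bases, ∀ e ∈ B \ B',
      ∃ f ∈ B' \ B, insert f (B.erase e) ∈ bases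

variable {α : Type*} [DecidableEq α]

/-- Independence with respect to a collection `𝓑` of bases: being contained in a basis. -/
def Indep (𝓑 : Finset (Finset α)) (I : Finset α) : Prop := ∃ B ∈ 𝓑, I ⊆ B

/-- The rank of a collection of bases: the (common) cardinality of the bases. -/
def dataRank (𝓑 : Finset (Finset α)) : ℕ := 𝓑.sup Finset.card

/-- The rank of a subset `A`: the maximal size of its intersection with a basis. -/
def dataRankOf (𝓑 : Finset (Finset α)) (A : Finset α) : ℕ := 𝓑.sup fun B => (B ∩ A).card

/-- Circuits: the minimal dependent subsets of the ground set. -/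
def IsCircuit (E : Finset α) (𝓑 : Finset (Finset α)) (C : Finset α) : Prop :=
  C ⊆ E ∧ ¬ Indep 𝓑 C ∧ ∀ D ⊂ C, Indep 𝓑 D

/-- A loop: an element lying in no basis. -/
def IsLoop (𝓑 : Finset (Finset α)) (e : α) : Prop := ∀ B ∈ 𝓑, e ∉ B

/-- A coloop: an element lying in every basis. -/
def IsColoop (𝓑 : Finset (Finset α)) (e : α) : Prop := ∀ B ∈ 𝓑, e ∈ B

/-- A handle: a nonempty subset of the ground set which every circuit
either avoids entirely or contains entirely. -/
def IsHandle (E : Finset α) (𝓑 : Finset (Finset α)) (H : Finset α) : Prop :=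
  H.Nonempty ∧ H ⊆ E ∧ ∀ C, IsCircuit E 𝓑 C → Disjoint H C ∨ H ⊆ C

/-- The rank of a matroid: the common cardinality of its bases. -/
def FinMatroid.rank (M : FinMatroid α) : ℕ := dataRank M.bases

/-- The bases of the deletion matroid `M \ H`: the maximal `M`-independent
subsets of `E ∖ H`. -/
noncomputable def deleteBases (M : FinMatroid α) (H : Finset α) : Finset (Finset α) :=
  ((M.E \ H).powerset.filter fun I => Indep M.bases I).filter
    fun I => ∀ J ∈ (M.E \ H).powerset, Indep M.bases J → I ⊆ J → I = J

/-- The bases of the contraction matroid `M / H` (for `H` independent):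
the sets `B \ H` where `B` is a basis of `M` containing `H`. -/
noncomputable def contractBases (M : FinMatroid α) (H : Finset α) : Finset (Finset α) :=
  (M.bases.filter fun B => H ⊆ B).image fun B => B \ H

/-- `𝓑N` is a quotient of `𝓑M` (on the common ground set `E`):
every circuit of `M` is a union of circuits of `N`. -/
def IsQuotientData (E : Finset α) (𝓑N 𝓑M : Finset (Finset α)) : Prop :=
  ∀ C, IsCircuit E 𝓑M C →
    ∃ 𝒞 : Finset (Finset α), (∀ D ∈ 𝒞, IsCircuit E 𝓑N D) ∧ C = 𝒞.sup id

/-- The bases of the truncation `τ(M)`: the independent sets of `M`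
of cardinality exactly `rank M - 1`. -/
noncomputable def truncBases (M : FinMatroid α) : Finset (Finset α) :=
  M.E.powerset.filter fun I => Indep M.bases I ∧ I.card = M.rank - 1

/-- The matroid basis polynomial `Ψ = ∑_{B basis} x^B`. -/
noncomputable def basisPoly (K : Type*) [CommRing K] (𝓑 : Finset (Finset α)) :
    MvPolynomial α K :=
  ∑ B ∈ 𝓑, ∏ e ∈ B, MvPolynomial.X e

/-- The multivariate Tutte polynomial
`Z = ∑_{A ⊆ E} p^(rank - rank A) x^A`, an element of `K[p][x_e : e ∈ E]`. -/
noncomputable def tutte (K : Type*) [CommRing K] (E : Finset α) (𝓑 : Finset (Finset α)) :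
    MvPolynomial α (Polynomial K) :=
  ∑ A ∈ E.powerset,
    MvPolynomial.C (Polynomial.X ^ (dataRank 𝓑 - dataRankOf 𝓑 A)) * ∏ a ∈ A, MvPolynomial.X a

/-- A polynomial with coefficient function `c` supported on the bases `𝓑`:
`∑_{B ∈ 𝓑} c_B x^B`. -/
noncomputable def msp (K : Type*) [CommRing K] (𝓑 : Finset (Finset α)) (c : Finset α → K) :
    MvPolynomial α K :=
  ∑ B ∈ 𝓑, MvPolynomial.C (c B) * ∏ e ∈ B, MvPolynomial.X e

theorem disjoint_or_subset_sup_of_forall_mem {H : Finset α} {𝒞 : Finset (Finset α)}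
    (h : ∀ D ∈ 𝒞, Disjoint H D ∨ H ⊆ D) : Disjoint H (𝒞.sup id) ∨ H ⊆ 𝒞.sup id := by
  by_cases hsub : ∃ D ∈ 𝒞, H ⊆ D
  · obtain ⟨D, hD, hHD⟩ := hsub
    exact Or.inr (hHD.trans (Finset.le_sup (f := id) hD))
  · push Not at hsub
    exact Or.inl (Finset.disjoint_sup_right.mpr fun D hD => (h D hD).resolve_right (hsub D hD))

theorem IsHandle.of_isQuotientData {E : Finset α} {𝓑N 𝓑M : Finset (Finset α)} {H : Finset α}
    (hq : IsQuotientData E 𝓑N 𝓑M) (hH : IsHandle E 𝓑N H) : IsHandle E 𝓑M H := by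
  obtain ⟨hne, hsub, hcirc⟩ := hH
  refine ⟨hne, hsub, fun C hC => ?_⟩
  obtain ⟨𝒞, h𝒞, rfl⟩ := hq C hC
  exact disjoint_or_subset_sup_of_forall_mem fun D hD => hcirc D (h𝒞 D hD)

theorem stmt3_general {α : Type*} [DecidableEq α] (M N : FinMatroid α)
    (hq : IsQuotientData M.E N.bases M.bases) :
    ∀ H, IsHandle M.E N.bases H → IsHandle M.E M.bases H :=
  fun _ hH => hH.of_isQuotientData hq

theorem stmt3 {α : Type*} [DecidableEq α] (M N : FinMatroid α) (hE : N.E = M.E)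
    (hq : IsQuotientData M.E N.bases M.bases) :
    ∀ H, IsHandle M.E N.bases H → IsHandle M.E M.bases H :=
  stmt3_general M N hq
end

section
/- Let H be a proper handle of a matroid M on E such that H is independent in M and contains no coloops of M. Then rank(M \ H) = rank(M) − |H| + 1. -/
open Classical

variable {α : Type*} [DecidableEq α]

/-!
If `I ⊆ E \ H` is independent and `h ∈ H`, then `I ∪ (H - h)` is still independent: a circuit
inside it would meet the handle `H` without containing it. Hence `|I| ≤ r - |H| + 1`.
Conversely, extend `H` to a basis `B` and exchange a non-coloop `h ∈ H` out of `B` for some `f`;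
then `(B \ H) + f` is independent, avoids `H` and attains the bound.
-/

open Finset

theorem Indep.mono {α : Type*} {𝓑 : Finset (Finset α)} {I J : Finset α} (hJ : Indep 𝓑 J)
    (hIJ : I ⊆ J) : Indep 𝓑 I :=
  let ⟨B, hB, hJB⟩ := hJ; ⟨B, hB, hIJ.trans hJB⟩

theorem exists_isCircuit_subset {α : Type*} {E S : Finset α} {𝓑 : Finset (Finset α)}
    (hSE : S ⊆ E) (hS : ¬ Indep 𝓑 S) : ∃ C ⊆ S, IsCircuit E 𝓑 C := by
  obtain ⟨C, hCS, hC⟩ := exists_minimal_le_of_wellFoundedLT (fun D => ¬ Indep 𝓑 D) S hS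
  exact ⟨C, hCS, hCS.trans hSE, hC.prop, fun D hDC => not_not.mp (hC.not_prop_of_lt hDC)⟩

theorem Indep.union_erase_of_isHandle {E H I : Finset α} {𝓑 : Finset (Finset α)}
    (hH : IsHandle E 𝓑 H) {h : α} (hh : h ∈ H) (hIE : I ⊆ E \ H) (hI : Indep 𝓑 I) :
    Indep 𝓑 (I ∪ H.erase h) := by
  by_contra hdep
  have hJE : I ∪ H.erase h ⊆ E :=
    union_subset (hIE.trans sdiff_subset) ((erase_subset h H).trans hH.2.1)
  obtain ⟨C, hCJ, hC⟩ := exists_isCircuit_subset hJE hdep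
  rcases hH.2.2 C hC with hdisj | hHC
  · refine hC.2.1 (hI.mono fun x hx => ?_)
    rcases mem_union.mp (hCJ hx) with hxI | hxH
    · exact hxI
    · exact absurd hx (disjoint_left.mp hdisj (mem_of_mem_erase hxH))
  · rcases mem_union.mp (hCJ (hHC hh)) with hhI | hhH
    · exact (mem_sdiff.mp (hIE hhI)).2 hh
    · exact notMem_erase h H hhH

namespace FinMatroid

theorem card_le_card_of_mem_bases (M : FinMatroid α) {B B' : Finset α} (hB : B ∈ M.bases)
    (hB' : B' ∈ M.bases) : B.card ≤ B'.card := by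
  induction hn : (B \ B').card generalizing B with
  | zero => exact card_le_card (sdiff_eq_empty_iff_subset.mp (card_eq_zero.mp hn))
  | succ n ih =>
    obtain ⟨e, he⟩ : (B \ B').Nonempty := card_pos.mp (by omega)
    obtain ⟨f, hf, hB₁⟩ := M.exchange B hB B' hB' e he
    have hcard : (insert f (B.erase e)).card = B.card := by
      rw [card_insert_of_notMem fun h => (mem_sdiff.mp hf).2 (mem_of_mem_erase h),
        card_erase_add_one (mem_sdiff.mp he).1]
    have hsdiff : insert f (B.erase e) \ B' = (B \ B').erase e := by
      ext x
      simp only [mem_sdiff, mem_insert, mem_erase]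
      constructor
      · rintro ⟨rfl | hx, hxB'⟩
        · exact absurd (mem_sdiff.mp hf).1 hxB'
        · exact ⟨hx.1, hx.2, hxB'⟩
      · rintro ⟨hxe, hxB, hxB'⟩
        exact ⟨Or.inr ⟨hxe, hxB⟩, hxB'⟩
    exact hcard ▸ ih hB₁ (by rw [hsdiff, card_erase_of_mem he, hn, Nat.add_sub_cancel])

theorem rank_eq_card (M : FinMatroid α) {B : Finset α} (hB : B ∈ M.bases) :
    M.rank = B.card :=
  le_antisymm (Finset.sup_le fun _ hB' => M.card_le_card_of_mem_bases hB' hB) (le_sup hB)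

theorem card_le_rank (M : FinMatroid α) {I : Finset α} (hI : Indep M.bases I) :
    I.card ≤ M.rank := by
  obtain ⟨B, hB, hIB⟩ := hI
  exact M.rank_eq_card hB ▸ card_le_card hIB

theorem dataRank_deleteBases (M : FinMatroid α) (H : Finset α) :
    dataRank (deleteBases M H) = ((M.E \ H).powerset.filter (Indep M.bases)).sup card := by
  set T := (M.E \ H).powerset.filter (Indep M.bases)
  refine le_antisymm (sup_mono (filter_subset _ _)) (Finset.sup_le fun S hS => ?_)
  obtain ⟨I, hIT, hImax⟩ := exists_max_image T card ⟨S, hS⟩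
  have hI : I ∈ deleteBases M H := mem_filter.mpr ⟨hIT, fun J hJ hJind hIJ =>
    eq_of_subset_of_card_le hIJ (hImax J (mem_filter.mpr ⟨hJ, hJind⟩))⟩
  exact (hImax S hS).trans (le_sup (f := card) hI)

theorem card_add_card_le_of_isHandle (M : FinMatroid α) {H I : Finset α}
    (hH : IsHandle M.E M.bases H) (hIE : I ⊆ M.E \ H) (hI : Indep M.bases I) :
    I.card + H.card ≤ M.rank + 1 := by
  obtain ⟨h, hh⟩ := hH.1
  have hdisj : Disjoint I (H.erase h) :=
    disjoint_of_subset_right (erase_subset h H) (subset_sdiff.mp hIE).2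
  have := M.card_le_rank (hI.union_erase_of_isHandle hH hh hIE)
  rw [card_union_of_disjoint hdisj, card_erase_of_mem hh] at this
  have := card_pos.mpr ⟨h, hh⟩
  omega

theorem exists_indep_card_add_card_eq (M : FinMatroid α) {H B : Finset α} (hB : B ∈ M.bases)
    (hHB : H ⊆ B) {h : α} (hh : h ∈ H) (hco : ¬ IsColoop M.bases h) :
    ∃ I ⊆ M.E \ H, Indep M.bases I ∧ I.card + H.card = M.rank + 1 := by
  obtain ⟨B', hB', hhB'⟩ : ∃ B' ∈ M.bases, h ∉ B' := by simpa [IsColoop] using hco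
  obtain ⟨f, hf, hB₁⟩ := M.exchange B hB B' hB' h (mem_sdiff.mpr ⟨hHB hh, hhB'⟩)
  obtain ⟨hfB', hfB⟩ := mem_sdiff.mp hf
  refine ⟨insert f (B \ H), ?_, ⟨_, hB₁, ?_⟩, ?_⟩
  · exact insert_subset (mem_sdiff.mpr ⟨M.subset_ground B' hB' hfB', fun hfH => hfB (hHB hfH)⟩)
      (sdiff_subset_sdiff (M.subset_ground B hB) subset_rfl)
  · exact insert_subset_insert f fun x hx =>
      mem_erase.mpr ⟨fun hxh => (mem_sdiff.mp hx).2 (hxh ▸ hh), (mem_sdiff.mp hx).1⟩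
  · rw [card_insert_of_notMem fun hfBH => hfB (mem_sdiff.mp hfBH).1, card_sdiff_of_subset hHB,
      M.rank_eq_card hB]
    have := card_le_card hHB
    omega

end FinMatroid

theorem stmt4_general {α : Type*} [DecidableEq α] (M : FinMatroid α) (H : Finset α)
    (hH : IsHandle M.E M.bases H)
    (hind : Indep M.bases H) (hco : ∀ h ∈ H, ¬ IsColoop M.bases h) :
    dataRank (deleteBases M H) = M.rank - H.card + 1 := by
  obtain ⟨B, hB, hHB⟩ := hind
  obtain ⟨h, hh⟩ := hH.1
  have hHr : H.card ≤ M.rank := M.rank_eq_card hB ▸ card_le_card hHB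
  rw [M.dataRank_deleteBases]
  refine le_antisymm (Finset.sup_le fun I hI => ?_) ?_
  · obtain ⟨hIE, hIind⟩ := mem_filter.mp hI
    have := M.card_add_card_le_of_isHandle hH (mem_powerset.mp hIE) hIind
    omega
  · obtain ⟨I, hIE, hIind, hIcard⟩ := M.exists_indep_card_add_card_eq hB hHB hh (hco h hh)
    exact (by omega : M.rank - H.card + 1 ≤ I.card).trans
      (le_sup (f := card) (mem_filter.mpr ⟨mem_powerset.mpr hIE, hIind⟩))

theorem stmt4 {α : Type*} [DecidableEq α] (M : FinMatroid α) (H : Finset α)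
    (hH : IsHandle M.E M.bases H) (hprop : H ≠ M.E)
    (hind : Indep M.bases H) (hco : ∀ h ∈ H, ¬ IsColoop M.bases h) :
    dataRank (deleteBases M H) = M.rank - H.card + 1 :=
  stmt4_general M H hH hind hco
end

section
/- Let H be a proper handle of a matroid M on E with H independent and containing no coloops of M. For any h ∈ H, every element of H ∖ {h} is a coloop of the deletion matroid M \ h. -/
open Classical

variable {α : Type*} [DecidableEq α]

/-! If `x ∈ H ∖ {h}` missed a basis `B` of `M \ h`, the circuit of `x` in `insert x B` would
meet the handle `H`, hence contain all of it and in particular `h`, which `insert x B` avoids. -/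

lemma Indep.subset {β : Type*} {𝓑 : Finset (Finset β)} {I J : Finset β} (hJ : Indep 𝓑 J)
    (hIJ : I ⊆ J) : Indep 𝓑 I :=
  let ⟨B, hB, hJB⟩ := hJ
  ⟨B, hB, hIJ.trans hJB⟩

lemma exists_isCircuit_subset_of_not_indep {β : Type*} {E : Finset β}
    {𝓑 : Finset (Finset β)} {S : Finset β} (hSE : S ⊆ E) (hdep : ¬ Indep 𝓑 S) :
    ∃ C ⊆ S, IsCircuit E 𝓑 C := by
  induction S using Finset.strongInduction with
  | _ S ih =>
    by_cases hmin : ∀ D ⊂ S, Indep 𝓑 D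
    · exact ⟨S, subset_rfl, hSE, hdep, hmin⟩
    · obtain ⟨D, hDS, hD⟩ := not_forall₂.mp hmin
      obtain ⟨C, hCD, hC⟩ := ih D hDS (hDS.subset.trans hSE) hD
      exact ⟨C, hCD.trans hDS.subset, hC⟩

lemma exists_isCircuit_mem_subset_insert {E : Finset α} {𝓑 : Finset (Finset α)}
    {I : Finset α} {x : α} (hIE : insert x I ⊆ E) (hI : Indep 𝓑 I)
    (hdep : ¬ Indep 𝓑 (insert x I)) : ∃ C ⊆ insert x I, x ∈ C ∧ IsCircuit E 𝓑 C := by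
  obtain ⟨C, hCsub, hC⟩ := exists_isCircuit_subset_of_not_indep hIE hdep
  refine ⟨C, hCsub, ?_, hC⟩
  by_contra hxC
  exact hC.2.1 (hI.subset fun y hy => (Finset.mem_insert.mp (hCsub hy)).resolve_left
    (by rintro rfl; exact hxC hy))

lemma subset_sdiff_of_mem_deleteBases {M : FinMatroid α} {D B : Finset α}
    (hB : B ∈ deleteBases M D) : B ⊆ M.E \ D := by
  simp only [deleteBases, Finset.mem_filter, Finset.mem_powerset] at hB
  exact hB.1.1

lemma indep_of_mem_deleteBases {M : FinMatroid α} {D B : Finset α}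
    (hB : B ∈ deleteBases M D) : Indep M.bases B := by
  simp only [deleteBases, Finset.mem_filter] at hB
  exact hB.1.2

lemma not_indep_insert_of_mem_deleteBases {M : FinMatroid α} {D B : Finset α} {x : α}
    (hB : B ∈ deleteBases M D) (hx : x ∈ M.E \ D) (hxB : x ∉ B) :
    ¬ Indep M.bases (insert x B) := by
  have hBE := subset_sdiff_of_mem_deleteBases hB
  simp only [deleteBases, Finset.mem_filter] at hB
  intro hindep
  have hBeq : B = insert x B := hB.2 (insert x B)
    (Finset.mem_powerset.mpr (Finset.insert_subset hx hBE)) hindep (Finset.subset_insert _ _)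
  exact hxB (hBeq ▸ Finset.mem_insert_self x B)

lemma isColoop_deleteBases_of_forall_isCircuit {M : FinMatroid α} {D : Finset α} {x : α}
    (hx : x ∈ M.E \ D) (hcirc : ∀ C, IsCircuit M.E M.bases C → x ∈ C → ¬ Disjoint C D) :
    IsColoop (deleteBases M D) x := by
  intro B hB
  by_contra hxB
  have hxBsub : insert x B ⊆ M.E \ D :=
    Finset.insert_subset hx (subset_sdiff_of_mem_deleteBases hB)
  obtain ⟨C, hCsub, hxC, hC⟩ := exists_isCircuit_mem_subset_insert
    (hxBsub.trans Finset.sdiff_subset) (indep_of_mem_deleteBases hB)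
    (not_indep_insert_of_mem_deleteBases hB hx hxB)
  exact hcirc C hC hxC (Finset.disjoint_of_subset_left (hCsub.trans hxBsub)
    Finset.sdiff_disjoint)

theorem stmt5_general {α : Type*} [DecidableEq α] (M : FinMatroid α) (H : Finset α)
    (hH : IsHandle M.E M.bases H)
    (h : α) (hh : h ∈ H) :
    ∀ x ∈ H.erase h, IsColoop (deleteBases M {h}) x := by
  intro x hx
  obtain ⟨hxh, hxH⟩ := Finset.mem_erase.mp hx
  refine isColoop_deleteBases_of_forall_isCircuit
    (Finset.mem_sdiff.mpr ⟨hH.2.1 hxH, Finset.notMem_singleton.mpr hxh⟩) fun C hC hxC => ?_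
  have hHC : H ⊆ C := (hH.2.2 C hC).resolve_left
    (Finset.not_disjoint_iff.mpr ⟨x, hxH, hxC⟩)
  exact Finset.not_disjoint_iff.mpr ⟨h, hHC hh, Finset.mem_singleton_self h⟩

theorem stmt5 {α : Type*} [DecidableEq α] (M : FinMatroid α) (H : Finset α)
    (hH : IsHandle M.E M.bases H) (hprop : H ≠ M.E)
    (hind : Indep M.bases H) (hco : ∀ h ∈ H, ¬ IsColoop M.bases h)
    (h : α) (hh : h ∈ H) :
    ∀ x ∈ H.erase h, IsColoop (deleteBases M {h}) x :=
  stmt5_general M H hH h hh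
end

section
/- Let H be a proper independent handle of a matroid M containing no coloops, and let Ψ denote the matroid basis polynomial. Then Ψ_M = (Σ_{h ∈ H} x^{H∖{h}}) · Ψ_{M∖H} + x^H · Ψ_{M/H}, where M∖H and M/H are the matroids obtained by deleting, respectively contracting, all elements of H. -/
open Classical

variable {α : Type*} [DecidableEq α]

/-! Every circuit either contains or avoids the handle `H`, so the fundamental circuit of an
element of `H` outside a basis contains all of `H`: each basis misses at most one element of `H`.
The bases containing `H` are the sets `H ∪ B''` with `B''` a basis of `M / H`. A basis missing
`h ∈ H` is `(H \ {h}) ∪ B'` with `B'` a basis of `M \ H`, and conversely, since `h` is not a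
coloop, every such union is a basis. Summing monomials over both kinds of bases gives the formula. -/

open Finset MvPolynomial

namespace FinMatroid

variable (M : FinMatroid α) {B B' D I : Finset α} {e : α}

theorem exchangeProperty :
    Matroid.ExchangeProperty fun X : Set α => ∃ B ∈ M.bases, (B : Set α) = X := by
  rintro _ _ ⟨B, hB, rfl⟩ ⟨B', hB', rfl⟩ e he
  obtain ⟨f, hf, hfB⟩ := M.exchange B hB B' hB' e (by simpa using he)
  exact ⟨f, by simpa using hf, _, hfB, by simp⟩

theorem card_eq_of_mem_bases (hB : B ∈ M.bases) (hB' : B' ∈ M.bases) : B.card = B'.card := by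
  simpa using M.exchangeProperty.encard_isBase_eq ⟨B, hB, rfl⟩ ⟨B', hB', rfl⟩

theorem eq_of_mem_bases_of_subset (hB : B ∈ M.bases) (hI : Indep M.bases I) (hBI : B ⊆ I) :
    I = B := by
  obtain ⟨B'', hB'', hIB''⟩ := hI
  exact (eq_of_subset_of_card_le hBI
    ((card_le_card hIB'').trans_eq (M.card_eq_of_mem_bases hB'' hB))).symm

theorem exists_isCircuit_subset (hDE : D ⊆ M.E) (hD : ¬ Indep M.bases D) :
    ∃ C ⊆ D, IsCircuit M.E M.bases C := by
  obtain ⟨C, ⟨hCD, hC⟩, hmin⟩ :=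
    exists_minimal_of_wellFoundedLT (fun C => C ⊆ D ∧ ¬ Indep M.bases C) ⟨D, subset_rfl, hD⟩
  refine ⟨C, hCD, hCD.trans hDE, hC, fun D' hD'C => ?_⟩
  by_contra hD'
  exact hD'C.2 (hmin ⟨hD'C.1.trans hCD, hD'⟩ hD'C.1)

theorem exists_isCircuit_mem_subset_insert (hB : B ∈ M.bases) (heE : e ∈ M.E) (heB : e ∉ B) :
    ∃ C, IsCircuit M.E M.bases C ∧ e ∈ C ∧ C ⊆ insert e B := by
  have hdep : ¬ Indep M.bases (insert e B) := fun hI =>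
    heB (M.eq_of_mem_bases_of_subset hB hI (subset_insert e B) ▸ mem_insert_self e B)
  obtain ⟨C, hCsub, hC⟩ := M.exists_isCircuit_subset (insert_subset heE (M.subset_ground B hB)) hdep
  refine ⟨C, hC, by_contra fun heC => hC.2.1 ⟨B, hB, ?_⟩, hCsub⟩
  exact fun x hx => (mem_insert.1 (hCsub hx)).resolve_left (by rintro rfl; exact heC hx)

end FinMatroid

section Deletion

variable {M : FinMatroid α} {H B B' : Finset α} {h : α}

theorem mem_deleteBases :
    B' ∈ deleteBases M H ↔ B' ⊆ M.E \ H ∧ Indep M.bases B' ∧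
      ∀ J ⊆ M.E \ H, Indep M.bases J → B' ⊆ J → B' = J := by
  simp [deleteBases, and_assoc]

theorem disjoint_of_mem_deleteBases (hB' : B' ∈ deleteBases M H) : Disjoint H B' :=
  (subset_sdiff.1 (mem_deleteBases.1 hB').1).2.symm

theorem sdiff_eq_of_mem_deleteBases (hB' : B' ∈ deleteBases M H) (hB : B ∈ M.bases)
    (hB'B : B' ⊆ B) : B \ H = B' :=
  ((mem_deleteBases.1 hB').2.2 _ (sdiff_subset_sdiff (M.subset_ground B hB) subset_rfl)
    ⟨B, hB, sdiff_subset⟩ (subset_sdiff.2 ⟨hB'B, (disjoint_of_mem_deleteBases hB').symm⟩)).symm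

/-- If the basis `B ⊇ B'` contains `h`, exchange `h` for an element of a basis avoiding it: the new
basis still contains `B'`, so maximality of `B'` again determines its part outside `H`. -/
theorem exists_mem_bases_notMem_sdiff_eq (hB' : B' ∈ deleteBases M H) (hh : h ∈ H)
    (hco : ¬ IsColoop M.bases h) : ∃ B ∈ M.bases, h ∉ B ∧ B \ H = B' := by
  obtain ⟨B, hB, hB'B⟩ := (mem_deleteBases.1 hB').2.1
  by_cases hhB : h ∈ B
  swap
  · exact ⟨B, hB, hhB, sdiff_eq_of_mem_deleteBases hB' hB hB'B⟩
  obtain ⟨B₀, hB₀, hhB₀⟩ : ∃ B₀ ∈ M.bases, h ∉ B₀ := by simpa [IsColoop] using hco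
  obtain ⟨f, hf, hB₁⟩ := M.exchange B hB B₀ hB₀ h (mem_sdiff.2 ⟨hhB, hhB₀⟩)
  have hfh : f ≠ h := by rintro rfl; exact (mem_sdiff.1 hf).2 (hhB)
  have hhB' : h ∉ B' := disjoint_left.1 (disjoint_of_mem_deleteBases hB') hh
  refine ⟨_, hB₁, by simp [hfh.symm], sdiff_eq_of_mem_deleteBases hB' hB₁ fun x hx => ?_⟩
  exact mem_insert_of_mem (mem_erase.2 ⟨by rintro rfl; exact hhB' hx, hB'B hx⟩)

end Deletion

namespace IsHandle

variable {M : FinMatroid α} {H B B' : Finset α} {h h₁ h₂ : α} (hH : IsHandle M.E M.bases H)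
include hH

theorem eq_of_notMem_of_notMem (hB : B ∈ M.bases) (h₁H : h₁ ∈ H) (h₂H : h₂ ∈ H)
    (h₁B : h₁ ∉ B) (h₂B : h₂ ∉ B) : h₁ = h₂ := by
  obtain ⟨C, hC, h₁C, hCB⟩ := M.exists_isCircuit_mem_subset_insert hB (hH.2.1 h₁H) h₁B
  have hHC : H ⊆ C := (hH.2.2 C hC).resolve_left (not_disjoint_iff.2 ⟨h₁, h₁H, h₁C⟩)
  simpa [h₂B, eq_comm] using hCB (hHC h₂H)

theorem erase_union_sdiff_eq (hB : B ∈ M.bases) (hh : h ∈ H) (hhB : h ∉ B) :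
    H.erase h ∪ B \ H = B := by
  ext x
  by_cases hxH : x ∈ H
  · have : x ∈ B ↔ x ≠ h := ⟨by rintro hxB rfl; exact hhB hxB,
      fun hxh => by_contra fun hxB => hxh (hH.eq_of_notMem_of_notMem hB hxH hh hxB hhB)⟩
    simp [hxH, this]
  · simp [hxH]

/-- An element `j ∉ B` of a larger independent `J ⊆ E \ H` has a fundamental circuit avoiding `h`,
hence disjoint from `H`, hence inside `J`. -/
theorem sdiff_mem_deleteBases (hB : B ∈ M.bases) (hh : h ∈ H) (hhB : h ∉ B) :
    B \ H ∈ deleteBases M H := by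
  refine mem_deleteBases.2 ⟨sdiff_subset_sdiff (M.subset_ground B hB) subset_rfl,
    ⟨B, hB, sdiff_subset⟩, fun J hJ hJI hBJ => hBJ.antisymm fun j hj => by_contra fun hjB => ?_⟩
  obtain ⟨hjE, hjH⟩ := mem_sdiff.1 (hJ hj)
  have hjB' : j ∉ B := fun hjB' => hjB (mem_sdiff.2 ⟨hjB', hjH⟩)
  obtain ⟨C, hC, -, hCB⟩ := M.exists_isCircuit_mem_subset_insert hB hjE hjB'
  have hHC : Disjoint H C := (hH.2.2 C hC).resolve_right fun hHC => by
    rcases mem_insert.1 (hCB (hHC hh)) with rfl | hhB'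
    exacts [hjH hh, hhB hhB']
  obtain ⟨B₁, hB₁, hJB₁⟩ := hJI
  refine hC.2.1 ⟨B₁, hB₁, fun x hx => hJB₁ ?_⟩
  rcases mem_insert.1 (hCB hx) with rfl | hxB
  exacts [hj, hBJ (mem_sdiff.2 ⟨hxB, disjoint_right.1 hHC hx⟩)]

theorem erase_union_mem_bases (hco : ∀ h ∈ H, ¬ IsColoop M.bases h)
    (hB' : B' ∈ deleteBases M H) (hh : h ∈ H) : H.erase h ∪ B' ∈ M.bases := by
  obtain ⟨B, hB, hhB, rfl⟩ := exists_mem_bases_notMem_sdiff_eq hB' hh (hco h hh)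
  rwa [hH.erase_union_sdiff_eq hB hh hhB]

theorem image_erase_union_deleteBases (hco : ∀ h ∈ H, ¬ IsColoop M.bases h) (hh : h ∈ H) :
    (deleteBases M H).image (H.erase h ∪ ·) = M.bases.filter (h ∉ ·) := by
  ext B
  simp only [mem_image, mem_filter]
  constructor
  · rintro ⟨B', hB', rfl⟩
    refine ⟨hH.erase_union_mem_bases hco hB' hh, ?_⟩
    simpa using disjoint_left.1 (disjoint_of_mem_deleteBases hB') hh
  · rintro ⟨hB, hhB⟩
    exact ⟨B \ H, hH.sdiff_mem_deleteBases hB hh hhB, hH.erase_union_sdiff_eq hB hh hhB⟩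

theorem sum_filter_not_subset {β : Type*} [AddCommMonoid β] (f : Finset α → β) :
    ∑ B ∈ M.bases.filter (¬ H ⊆ ·), f B = ∑ h ∈ H, ∑ B ∈ M.bases.filter (h ∉ ·), f B := by
  rw [← sum_biUnion]
  · congr 1
    ext B
    simp only [mem_filter, mem_biUnion, not_subset]
    tauto
  · intro h₁ h₁H h₂ h₂H hne
    simp only [Function.onFun, disjoint_left, mem_filter]
    exact fun B ⟨hB, h₁B⟩ ⟨_, h₂B⟩ => hne (hH.eq_of_notMem_of_notMem hB h₁H h₂H h₁B h₂B)

end IsHandle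

section BasisPoly

variable (K : Type*) [CommRing K] {M : FinMatroid α} {H : Finset α} {h : α}

theorem sum_filter_subset_eq_mul_basisPoly_contractBases :
    ∑ B ∈ M.bases.filter (H ⊆ ·), ∏ e ∈ B, (X e : MvPolynomial α K) =
      (∏ e ∈ H, X e) * basisPoly K (contractBases M H) := by
  rw [basisPoly, contractBases, sum_image, mul_sum]
  · exact sum_congr rfl fun B hB => by rw [mul_comm, prod_sdiff (mem_filter.1 hB).2]
  · intro B₁ hB₁ B₂ hB₂ hB
    rw [← sdiff_union_of_subset (mem_filter.1 hB₁).2, ← sdiff_union_of_subset (mem_filter.1 hB₂).2]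
    exact congrArg (· ∪ H) hB

theorem IsHandle.sum_filter_notMem_eq_mul_basisPoly_deleteBases (hH : IsHandle M.E M.bases H)
    (hco : ∀ h ∈ H, ¬ IsColoop M.bases h) (hh : h ∈ H) :
    ∑ B ∈ M.bases.filter (h ∉ ·), ∏ e ∈ B, (X e : MvPolynomial α K) =
      (∏ e ∈ H.erase h, X e) * basisPoly K (deleteBases M H) := by
  have hdisj {B'} (hB' : B' ∈ deleteBases M H) : Disjoint (H.erase h) B' :=
    (disjoint_of_mem_deleteBases hB').mono_left (erase_subset h H)
  rw [← hH.image_erase_union_deleteBases hco hh, sum_image, basisPoly, mul_sum]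
  · exact sum_congr rfl fun B' hB' => prod_union (hdisj hB')
  · intro B₁ hB₁ B₂ hB₂ hB
    simpa [union_sdiff_cancel_left (hdisj hB₁), union_sdiff_cancel_left (hdisj hB₂)] using
      congrArg (· \ H.erase h) hB

end BasisPoly

theorem stmt16_general {α : Type*} [DecidableEq α] {K : Type*} [CommRing K]
    (M : FinMatroid α) (H : Finset α)
    (hH : IsHandle M.E M.bases H)
    (hco : ∀ h ∈ H, ¬ IsColoop M.bases h) :
    basisPoly K M.bases =
      (∑ h ∈ H, ∏ e ∈ H.erase h, MvPolynomial.X e) * basisPoly K (deleteBases M H) +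
        (∏ e ∈ H, MvPolynomial.X e) * basisPoly K (contractBases M H) := by
  rw [basisPoly, ← sum_filter_not_add_sum_filter M.bases (H ⊆ ·), hH.sum_filter_not_subset,
    sum_filter_subset_eq_mul_basisPoly_contractBases, sum_mul]
  congr 1
  exact sum_congr rfl fun h hh => hH.sum_filter_notMem_eq_mul_basisPoly_deleteBases K hco hh

theorem stmt16 {α : Type*} [DecidableEq α] {K : Type*} [CommRing K]
    (M : FinMatroid α) (H : Finset α)
    (hH : IsHandle M.E M.bases H) (hprop : H ≠ M.E)
    (hind : Indep M.bases H) (hco : ∀ h ∈ H, ¬ IsColoop M.bases h) :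
    basisPoly K M.bases =
      (∑ h ∈ H, ∏ e ∈ H.erase h, MvPolynomial.X e) * basisPoly K (deleteBases M H) +
        (∏ e ∈ H, MvPolynomial.X e) * basisPoly K (contractBases M H) :=
  stmt16_general M H hH hco
end

section
/- Let M be a matroid on E over a field F of characteristic p > 0, let Ψ_M = Σ_{B ∈ 𝓑(M)} x^B be its matroid basis polynomial, and let e ∈ E be an element that is not a coloop. Then x_e · Ψ_M^{p−1} does not belong to the Frobenius power m^{[p]} = ({x_f^p : f ∈ E}) of the maximal ideal m = ({x_f : f ∈ E}): concretely, for any basis B of M avoiding e, the monomial x_e · x^{(p−1)·B} occurs in x_e Ψ_M^{p−1} with coefficient 1, and this monomial lies outside m^{[p]}. -/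
open Classical

variable {α : Type*} [DecidableEq α]

/-!
Every exponent of `Ψ_M` is a `0/1` vector, so every exponent `d` of `Ψ_M ^ n` satisfies `d ≤ n`
pointwise. Hence in `Ψ_M ^ n = Ψ_M ^ (n - 1) * Ψ_M` the exponent `n • 1_B` of a basis `B` can only
be split as `(n - 1) • 1_B + 1_B`, and by induction its coefficient is `1`. For a basis `B`
avoiding `e`, all entries of `1_e + (p - 1) • 1_B` are `< p`, while every element of
`(x_f ^ p : f ∈ E)` only has monomials with some exponent `≥ p`.
-/

open MvPolynomial

namespace MvPolynomial

variable {σ R : Type*} [CommSemiring R]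

theorem mem_span_X_pow_image_iff {n : ℕ} {s : Set σ} {q : MvPolynomial σ R} :
    q ∈ Ideal.span ((fun i => (X i : MvPolynomial σ R) ^ n) '' s) ↔
      ∀ m ∈ q.support, ∃ i ∈ s, n ≤ m i := by
  have := @mem_ideal_span_monomial_image σ R _ q ((fun i => Finsupp.single i n) '' s)
  rw [Set.image_image] at this
  simp_rw [X_pow_eq_monomial]
  refine this.trans ?_
  simp [Finsupp.single_le_iff]

theorem notMem_span_X_pow_image_of_coeff_ne_zero {n : ℕ} {s : Set σ} {q : MvPolynomial σ R}
    {m : σ →₀ ℕ} (hm : coeff m q ≠ 0) (hlt : ∀ i, m i < n) :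
    q ∉ Ideal.span ((fun i => (X i : MvPolynomial σ R) ^ n) '' s) := by
  rw [mem_span_X_pow_image_iff]
  intro h
  obtain ⟨i, -, hi⟩ := h m (mem_support_iff.mpr hm)
  exact (hlt i).not_ge hi

theorem coeff_nsmul_pow_of_degreeOf_le_one {P : MvPolynomial σ R}
    (hP : ∀ i, P.degreeOf i ≤ 1) (m : σ →₀ ℕ) (n : ℕ) :
    coeff (n • m) (P ^ n) = coeff m P ^ n := by
  induction n with
  | zero => simp
  | succ n ih =>
    rw [pow_succ, pow_succ, coeff_mul, ← ih]
    have hmem : (n • m, m) ∈ Finset.HasAntidiagonal.antidiagonal ((n + 1) • m) := by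
      rw [Finset.HasAntidiagonal.mem_antidiagonal, succ_nsmul]
    refine Finset.sum_eq_single_of_mem _ hmem fun x hx hne => ?_
    rw [Finset.HasAntidiagonal.mem_antidiagonal] at hx
    by_contra hx0
    have h₁ : x.1 ∈ (P ^ n).support := mem_support_iff.mpr (left_ne_zero_of_mul hx0)
    have h₂ : x.2 ∈ P.support := mem_support_iff.mpr (right_ne_zero_of_mul hx0)
    -- `x.1 ≤ n` and `x.2 ≤ 1` pointwise leave no room for any splitting but the diagonal one.
    have key : ∀ i, x.1 i = n * m i ∧ x.2 i = m i := by
      intro i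
      have hsum : x.1 i + x.2 i = (n + 1) * m i := by
        simpa using DFunLike.congr_fun hx i
      have hle₁ : x.1 i ≤ n :=
        (le_degreeOf_of_mem_support i h₁).trans
          ((degreeOf_pow_le i P n).trans (by simpa using Nat.mul_le_mul_left n (hP i)))
      have hle₂ : x.2 i ≤ 1 := (le_degreeOf_of_mem_support i h₂).trans (hP i)
      rcases Nat.lt_or_ge (m i) 2 with hm | hm
      · interval_cases m i <;> omega
      · nlinarith
    exact hne (Prod.ext (Finsupp.ext fun i => by simpa using (key i).1)
      (Finsupp.ext fun i => (key i).2))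

end MvPolynomial

section BasisPoly

variable {β : Type*}

theorem sum_single_one_apply [DecidableEq β] (B : Finset β) (a : β) :
    (∑ f ∈ B, Finsupp.single f 1 : β →₀ ℕ) a = if a ∈ B then 1 else 0 := by
  simp [Finsupp.finsetSum_apply, Finsupp.single_apply]

theorem sum_single_one_injective :
    Function.Injective fun B : Finset β => (∑ f ∈ B, Finsupp.single f 1 : β →₀ ℕ) := by
  classical
  intro B B' h
  ext a
  have := DFunLike.congr_fun h a
  simp only [sum_single_one_apply] at this
  split_ifs at this <;> simp_all

theorem basisPoly_eq_sum_monomial (R : Type*) [CommRing R] (𝓑 : Finset (Finset β)) :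
    basisPoly R 𝓑 = ∑ B ∈ 𝓑, monomial (∑ f ∈ B, Finsupp.single f 1) 1 := by
  simp only [basisPoly, monomial_sum_one]
  rfl

theorem degreeOf_basisPoly_le_one (R : Type*) [CommRing R] (𝓑 : Finset (Finset β)) (a : β) :
    (basisPoly R 𝓑).degreeOf a ≤ 1 := by
  rw [basisPoly_eq_sum_monomial]
  refine (degreeOf_sum_le a _ _).trans (Finset.sup_le fun B _ => degreeOf_le_iff.mpr ?_)
  intro m hm
  rw [Finset.mem_singleton.mp (support_monomial_subset hm), sum_single_one_apply]
  split_ifs <;> omega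

theorem coeff_basisPoly_of_mem (R : Type*) [CommRing R] {𝓑 : Finset (Finset β)}
    {B : Finset β} (hB : B ∈ 𝓑) :
    coeff (∑ f ∈ B, Finsupp.single f 1) (basisPoly R 𝓑) = 1 := by
  rw [basisPoly_eq_sum_monomial, coeff_sum, Finset.sum_eq_single_of_mem B hB, coeff_monomial,
    if_pos rfl]
  intro B' _ hne
  rw [coeff_monomial, if_neg fun h => hne (sum_single_one_injective h)]

theorem coeff_nsmul_basisPoly_pow (R : Type*) [CommRing R] {𝓑 : Finset (Finset β)}
    {B : Finset β} (hB : B ∈ 𝓑) (n : ℕ) :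
    coeff (n • ∑ f ∈ B, Finsupp.single f 1) (basisPoly R 𝓑 ^ n) = 1 := by
  rw [coeff_nsmul_pow_of_degreeOf_le_one (degreeOf_basisPoly_le_one R 𝓑),
    coeff_basisPoly_of_mem R hB, one_pow]

end BasisPoly

theorem stmt19_general {α : Type*} [DecidableEq α] {F : Type*} [Field F]
    (p : ℕ) (hp : p.Prime)
    (M : FinMatroid α) (e : α) (hne : ¬ IsColoop M.bases e) :
    (∀ B ∈ M.bases, e ∉ B →
      MvPolynomial.coeff (Finsupp.single e 1 + (p - 1) • ∑ f ∈ B, Finsupp.single f 1)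
          (MvPolynomial.X e * (basisPoly F M.bases) ^ (p - 1)) = 1 ∧
      MvPolynomial.monomial (Finsupp.single e 1 + (p - 1) • ∑ f ∈ B, Finsupp.single f 1)
          (1 : F) ∉
        Ideal.span ((fun f => (MvPolynomial.X f : MvPolynomial α F) ^ p) '' ↑M.E)) ∧
    MvPolynomial.X e * (basisPoly F M.bases) ^ (p - 1) ∉
      Ideal.span ((fun f => (MvPolynomial.X f : MvPolynomial α F) ^ p) '' ↑M.E) := by
  have hcoeff : ∀ B ∈ M.bases,
      coeff (Finsupp.single e 1 + (p - 1) • ∑ f ∈ B, Finsupp.single f 1)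
        (X e * basisPoly F M.bases ^ (p - 1)) = 1 := fun B hB => by
    rw [coeff_X_mul, coeff_nsmul_basisPoly_pow F hB]
  have hlt : ∀ B : Finset α, e ∉ B → ∀ a,
      (Finsupp.single e 1 + (p - 1) • ∑ f ∈ B, Finsupp.single f 1 : α →₀ ℕ) a < p := by
    intro B heB a
    have := hp.one_lt
    rw [Finsupp.add_apply, Finsupp.smul_apply, sum_single_one_apply, Finsupp.single_apply]
    split_ifs <;> simp_all <;> omega
  refine ⟨fun B hB heB => ⟨hcoeff B hB, ?_⟩, ?_⟩
  · exact notMem_span_X_pow_image_of_coeff_ne_zero (by simp) (hlt B heB)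
  · obtain ⟨B, hB, heB⟩ : ∃ B ∈ M.bases, e ∉ B := by simpa [IsColoop] using hne
    exact notMem_span_X_pow_image_of_coeff_ne_zero (by simp [hcoeff B hB]) (hlt B heB)

theorem stmt19 {α : Type*} [DecidableEq α] {F : Type*} [Field F]
    (p : ℕ) (hp : p.Prime) [CharP F p]
    (M : FinMatroid α) (e : α) (he : e ∈ M.E) (hne : ¬ IsColoop M.bases e) :
    (∀ B ∈ M.bases, e ∉ B →
      MvPolynomial.coeff (Finsupp.single e 1 + (p - 1) • ∑ f ∈ B, Finsupp.single f 1)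
          (MvPolynomial.X e * (basisPoly F M.bases) ^ (p - 1)) = 1 ∧
      MvPolynomial.monomial (Finsupp.single e 1 + (p - 1) • ∑ f ∈ B, Finsupp.single f 1)
          (1 : F) ∉
        Ideal.span ((fun f => (MvPolynomial.X f : MvPolynomial α F) ^ p) '' ↑M.E)) ∧
    MvPolynomial.X e * (basisPoly F M.bases) ^ (p - 1) ∉
      Ideal.span ((fun f => (MvPolynomial.X f : MvPolynomial α F) ^ p) '' ↑M.E) :=
  stmt19_general p hp M e hne
end
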